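/- Let n ≥ 4 and m be such that C(n-4, 2) ≥ m - 1. For any two graphs G1 = (N, E1) and G2 = (N, E2) on the same vertex set N with |N| = n and |E1| = |E2| = m, there exists a finite sequence of single-edge replacements (each step deletes one edge and adds one edge, keeping exactly m edges and a simple graph at all times) transforming E1 into E2. -/
import Mathlib


/-- A single-edge replacement: delete an edge `s(u,v) ∈ E` and add an edge `s(u,w) ∉ E`
with `w ≠ u`, keeping a simple graph with the same number of edges. -/
def EdgeReplacement {N : Type*} [DecidableEq N] (E E' : Finset (Sym2 N)) : Prop :=
  ∃ u v w : N, s(u, v) ∈ E ∧ w ≠ u ∧ s(u, w) ∉ E ∧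
    E' = insert s(u, w) (E.erase s(u, v))

lemma swap_step {N : Type*} [DecidableEq N] (E : Finset (Sym2 N)) (e f : Sym2 N)
    (he : e ∈ E) (hf : f ∉ E) (hed : ¬ e.IsDiag) (hfd : ¬ f.IsDiag) :
    Relation.ReflTransGen EdgeReplacement E (insert f (E.erase e)) := by
  induction e using Sym2.inductionOn with
  | hf a b =>
  induction f using Sym2.inductionOn with
  | hf c d =>
  have hab : a ≠ b := by simpa using hed
  have hcd : c ≠ d := by simpa using hfd
  by_cases hac : a = c
  · subst hac
    exact Relation.ReflTransGen.single ⟨a, b, d, he, Ne.symm hcd, hf, rfl⟩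
  by_cases had : a = d
  · subst had
    refine Relation.ReflTransGen.single ⟨a, b, c, he, fun h => hac h.symm, ?_, ?_⟩
    · rwa [show s(a,c) = s(c,a) from Sym2.eq_swap]
    · rw [show s(c,a) = s(a,c) from Sym2.eq_swap]
  by_cases hbc : b = c
  · subst hbc
    refine Relation.ReflTransGen.single ⟨b, a, d, ?_, Ne.symm hcd, hf, ?_⟩
    · rwa [show s(b,a) = s(a,b) from Sym2.eq_swap]
    · rw [show s(b,a) = s(a,b) from Sym2.eq_swap]
  by_cases hbd : b = d
  · subst hbd
    refine Relation.ReflTransGen.single ⟨b, a, c, ?_, fun h => hbc h.symm, ?_, ?_⟩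
    · rwa [show s(b,a) = s(a,b) from Sym2.eq_swap]
    · rwa [show s(b,c) = s(c,b) from Sym2.eq_swap]
    · rw [show s(b,a) = s(a,b) from Sym2.eq_swap,
        show s(b,c) = s(c,b) from Sym2.eq_swap]
  -- all four endpoints distinct
  have hge : s(a, c) ≠ s(a, b) := by simp [Sym2.eq_iff]; tauto
  have hgf : s(a, c) ≠ s(c, d) := by simp [Sym2.eq_iff]; tauto
  have hef : s(a, b) ≠ s(c, d) := fun h => hf (h ▸ he)
  by_cases hg : s(a, c) ∈ E
  · -- replace (a,c) by (c,d), then (a,b) by (a,c)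
    have step1 : EdgeReplacement E (insert s(c,d) (E.erase s(a,c))) := by
      refine ⟨c, a, d, ?_, Ne.symm hcd, hf, ?_⟩
      · rwa [show s(c,a) = s(a,c) from Sym2.eq_swap]
      · rw [show s(c,a) = s(a,c) from Sym2.eq_swap]
    have step2 : EdgeReplacement (insert s(c,d) (E.erase s(a,c)))
        (insert s(c,d) (E.erase s(a,b))) := by
      refine ⟨a, b, c, ?_, fun h => hac h.symm, ?_, ?_⟩
      · exact Finset.mem_insert_of_mem (Finset.mem_erase.2 ⟨fun h => hge h.symm, he⟩)
      · intro h
        rcases Finset.mem_insert.1 h with h | h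
        · exact hgf h
        · exact (Finset.mem_erase.1 h).1 rfl
      · ext x
        simp only [Finset.mem_insert, Finset.mem_erase]
        by_cases hx1 : x = s(a,c) <;> by_cases hx2 : x = s(c,d) <;>
          by_cases hx3 : x = s(a,b) <;> simp_all
    exact Relation.ReflTransGen.head step1 (Relation.ReflTransGen.single step2)
  · -- replace (a,b) by (a,c), then (a,c) by (c,d)
    have step1 : EdgeReplacement E (insert s(a,c) (E.erase s(a,b))) :=
      ⟨a, b, c, he, fun h => hac h.symm, hg, rfl⟩
    have step2 : EdgeReplacement (insert s(a,c) (E.erase s(a,b)))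
        (insert s(c,d) (E.erase s(a,b))) := by
      refine ⟨c, a, d, ?_, Ne.symm hcd, ?_, ?_⟩
      · rw [show s(c,a) = s(a,c) from Sym2.eq_swap]
        exact Finset.mem_insert_self _ _
      · intro h
        rcases Finset.mem_insert.1 h with h | h
        · exact hgf h.symm
        · exact hf (Finset.mem_of_mem_erase h)
      · rw [show s(c,a) = s(a,c) from Sym2.eq_swap]
        ext x
        simp only [Finset.mem_insert, Finset.mem_erase]
        by_cases hx1 : x = s(a,c) <;> by_cases hx2 : x = s(c,d) <;>
          by_cases hx3 : x = s(a,b) <;> simp_all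
    exact Relation.ReflTransGen.head step1 (Relation.ReflTransGen.single step2)

/-- If `n ≥ 4` and `C(n-4, 2) ≥ m - 1`, then any two simple graphs on a common vertex set of
size `n`, each with `m` edges, are connected by a finite sequence of single-edge
replacements. -/
theorem edge_replacement_reachability {N : Type*} [Fintype N] [DecidableEq N]
    (n m : ℕ) (hn : 4 ≤ n) (hcard : Fintype.card N = n) (hm : m - 1 ≤ (n - 4).choose 2)
    (E1 E2 : Finset (Sym2 N))
    (h1 : ∀ e ∈ E1, ¬ e.IsDiag) (h2 : ∀ e ∈ E2, ¬ e.IsDiag)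
    (hc1 : E1.card = m) (hc2 : E2.card = m) :
    Relation.ReflTransGen EdgeReplacement E1 E2 := by
  clear hn hcard hm
  suffices H : ∀ k (E1 : Finset (Sym2 N)), (∀ e ∈ E1, ¬ e.IsDiag) → E1.card = E2.card →
      (E1 \ E2).card = k → Relation.ReflTransGen EdgeReplacement E1 E2 by
    exact H _ E1 h1 (hc1.trans hc2.symm) rfl
  intro k
  induction k with
  | zero =>
    intro E1 h1 hcc hk
    have hsub : E1 ⊆ E2 := by
      rw [← Finset.sdiff_eq_empty_iff_subset]
      exact Finset.card_eq_zero.1 hk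
    rw [Finset.eq_of_subset_of_card_le hsub (le_of_eq hcc.symm)]
  | succ k ih =>
    intro E1 h1 hcc hk
    have hne : (E1 \ E2).Nonempty := by
      rw [← Finset.card_pos, hk]; omega
    obtain ⟨e, he⟩ := hne
    have he1 : e ∈ E1 := (Finset.mem_sdiff.1 he).1
    have hne2 : (E2 \ E1).Nonempty := by
      rw [← Finset.card_pos, Finset.card_sdiff_comm hcc.symm, hk]; omega
    obtain ⟨f, hfm⟩ := hne2
    have hf2 : f ∈ E2 := (Finset.mem_sdiff.1 hfm).1
    have hf1 : f ∉ E1 := (Finset.mem_sdiff.1 hfm).2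
    refine (swap_step E1 e f he1 hf1 (h1 e he1) (h2 f hf2)).trans (ih _ ?_ ?_ ?_)
    · intro x hx
      rcases Finset.mem_insert.1 hx with h | h
      · exact h ▸ h2 f hf2
      · exact h1 x (Finset.mem_of_mem_erase h)
    · rw [Finset.card_insert_of_notMem (fun h => hf1 (Finset.mem_of_mem_erase h)),
        Finset.card_erase_of_mem he1, hcc]
      have : 0 < E2.card := by rw [← hcc, Finset.card_pos]; exact ⟨e, he1⟩
      omega
    · have heq : insert f (E1.erase e) \ E2 = (E1 \ E2).erase e := by
        ext x
        simp only [Finset.mem_sdiff, Finset.mem_insert, Finset.mem_erase]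
        constructor
        · rintro ⟨h | h, hx2⟩
          · exact absurd (h ▸ hf2) hx2
          · exact ⟨h.1, h.2, hx2⟩
        · rintro ⟨hxe, hx1, hx2⟩
          exact ⟨Or.inr ⟨hxe, hx1⟩, hx2⟩
      rw [heq, Finset.card_erase_of_mem he, hk]
      omega
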